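/- arXiv:1402.0402 — 2 statements merged into one kernel-verified Lean document; each statement's English description precedes it below -/
import Mathlib

section
/- Let m_P be the perfect metric and let (x,y) be an arc of G^∧π. If no intermediate or upper triangle {x,y,z} satisfies m_P(x,y) = m_P(x,z) + m_P(z,y) (where m_P(u,v) denotes the weight of the edge {u,v} of G*π), then the single-arc path consisting of (x,y) is the only up-down xy-path whose length under m_P equals m_P(x,y); hence the arc (x,y) cannot be deleted while preserving a shortest up-down path between every pair of vertices. -/
open SimpleGraph
open scoped ENNReal

variable {V : Type*}

/-- One step of vertex contraction: remove `v` from the current graph and add an edge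
between every pair of its current neighbors. -/
def chStep (H : SimpleGraph V) (v : V) : SimpleGraph V where
  Adj a b := a ≠ b ∧ a ≠ v ∧ b ≠ v ∧ (H.Adj a b ∨ (H.Adj v a ∧ H.Adj v b))
  symm := by
    constructor
    rintro a b ⟨h1, h2, h3, h4⟩
    refine ⟨h1.symm, h3, h2, ?_⟩
    rcases h4 with h | ⟨ha, hb⟩
    · exact Or.inl h.symm
    · exact Or.inr ⟨hb, ha⟩
  loopless := ⟨fun a h => h.1 rfl⟩

/-- All edges ever present while contracting the vertices of the list in order:
the edges of the initial graph together with all added shortcuts. -/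
def chList : SimpleGraph V → List V → SimpleGraph V
  | H, [] => H
  | H, v :: l => H ⊔ chList (chStep H v) l

/-- The rank of a vertex with respect to the contraction order `π`. -/
def rk {n : ℕ} (π : Fin n ≃ V) (v : V) : ℕ := (π.symm v : ℕ)

/-- The contraction hierarchy `G*π`: contract `π 0, π 1, …` in this order and collect
all original edges and all added shortcuts. -/
def chGraph {n : ℕ} (G : SimpleGraph V) (π : Fin n ≃ V) : SimpleGraph V :=
  chList G ((List.finRange n).map ⇑π)

/-- A list of vertices is up-down w.r.t. a rank function: ranks strictly increase
along a prefix and strictly decrease along the remaining suffix, the two parts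
meeting at the maximum-rank vertex. -/
def IsUpDown (r : V → ℕ) (l : List V) : Prop :=
  ∃ l₁ x l₂, l = l₁ ++ x :: l₂ ∧
    List.Chain' (fun a b => r a < r b) (l₁ ++ [x]) ∧
    List.Chain' (fun a b => r b < r a) (x :: l₂)

/-- Reachability in the upward directed graph `G^∧π` (edges of `G*π` directed from
lower to higher rank): the vertex set of the search space `SS v`. -/
def UpReach {n : ℕ} (G : SimpleGraph V) (π : Fin n ≃ V) (v u : V) : Prop :=
  Relation.ReflTransGen (fun a b => (chGraph G π).Adj a b ∧ rk π a < rk π b) v u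

/-- Length of a walk: the sum of the weights of its edges. -/
noncomputable def wlen {H : SimpleGraph V} (m : V → V → ℝ≥0∞) {s t : V}
    (p : H.Walk s t) : ℝ≥0∞ :=
  (p.darts.map (fun d => m d.toProd.1 d.toProd.2)).sum

/-- Shortest path distance in a graph `H` under edge weights `m`. -/
noncomputable def gdist (H : SimpleGraph V) (m : V → V → ℝ≥0∞) (s t : V) : ℝ≥0∞ :=
  ⨅ (p : H.Walk s t), wlen m p

/-- Minimum length of an up-down `s`-`t` path in `G*π`. -/
noncomputable def updist {n : ℕ} (G : SimpleGraph V) (π : Fin n ≃ V)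
    (m : V → V → ℝ≥0∞) (s t : V) : ℝ≥0∞ :=
  ⨅ (p : (chGraph G π).Walk s t) (_ : IsUpDown (rk π) p.support), wlen m p

/-- Minimum length of a strictly rank-increasing `u`-`v` path in `G*π`. -/
noncomputable def upOnlyDist {n : ℕ} (G : SimpleGraph V) (π : Fin n ≃ V)
    (m : V → V → ℝ≥0∞) (u v : V) : ℝ≥0∞ :=
  ⨅ (p : (chGraph G π).Walk u v)
    (_ : List.Chain' (fun a b => rk π a < rk π b) p.support), wlen m p

/-- `S` is a balanced separator of the subgraph of `G` induced by `U`. -/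
def IsBalancedSepOn [DecidableEq V] (G : SimpleGraph V) (U S : Finset V) : Prop :=
  S ⊆ U ∧ ∃ A B : Finset V, A ⊆ U ∧ B ⊆ U ∧
    Disjoint A B ∧ Disjoint A S ∧ Disjoint B S ∧ A ∪ B ∪ S = U ∧
    (∀ a ∈ A, ∀ b ∈ B, ¬ G.Adj a b) ∧
    3 * A.card ≤ 2 * U.card ∧ 3 * B.card ≤ 2 * U.card

/-- Nested dissection orders (as lists, earliest contracted first, separator last)
of induced subgraphs of `G`, in which the separator chosen at every recursion step on
a `k`-vertex subgraph is balanced and has cardinality at most `c * k ^ α`. -/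
inductive IsNDOrder [DecidableEq V] (G : SimpleGraph V) (c α : ℝ) : Finset V → List V → Prop
  | empty : IsNDOrder G c α ∅ []
  | step {U S A B : Finset V} {lA lB lS : List V} :
      Disjoint A B → Disjoint A S → Disjoint B S → A ∪ B ∪ S = U →
      (∀ a ∈ A, ∀ b ∈ B, ¬ G.Adj a b) →
      3 * A.card ≤ 2 * U.card → 3 * B.card ≤ 2 * U.card →
      ((S.card : ℝ) ≤ c * (U.card : ℝ) ^ α) →
      lS.Nodup → lS.toFinset = S →
      IsNDOrder G c α A lA → IsNDOrder G c α B lB →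
      IsNDOrder G c α U (lA ++ lB ++ lS)

/-- Number of vertices of the search space `SS v` in `G^∧π`. -/
noncomputable def nVertsSS {n : ℕ} (G : SimpleGraph V) (π : Fin n ≃ V) (v : V) : ℕ :=
  {u | UpReach G π v u}.ncard

/-- Number of arcs of the search space `SS v` in `G^∧π`: arcs of `G^∧π` with both
endpoints reachable from `v`. -/
noncomputable def nArcsSS {n : ℕ} (G : SimpleGraph V) (π : Fin n ≃ V) (v : V) : ℕ :=
  {q : V × V | (chGraph G π).Adj q.1 q.2 ∧ rk π q.1 < rk π q.2 ∧
    UpReach G π v q.1 ∧ UpReach G π v q.2}.ncard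

/-- The rank sequence of a walk: for each edge, the minimum of the ranks of its
endpoints, sorted in decreasing order. -/
def rankSeq {H : SimpleGraph V} (r : V → ℕ) {s t : V} (p : H.Walk s t) : List ℕ :=
  (p.darts.map (fun d => min (r d.toProd.1) (r d.toProd.2))).insertionSort (· ≥ ·)

/-- Directed length of a walk in `G*π` under a pair of directed metrics `(mu, md)`:
each edge traversed from lower rank to higher rank costs its upward weight,
each edge traversed from higher rank to lower rank costs its downward weight. -/
noncomputable def dlen {H : SimpleGraph V} (r : V → ℕ) (mu md : V → V → ℝ≥0∞)
    {s t : V} (p : H.Walk s t) : ℝ≥0∞ :=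
  (p.darts.map (fun d =>
    if r d.toProd.1 < r d.toProd.2 then mu d.toProd.1 d.toProd.2
    else md d.toProd.2 d.toProd.1)).sum

/-- Length of a directed walk `s :: l` under arc weights `wD`. -/
noncomputable def dWalkLen (wD : V → V → ℝ≥0∞) : V → List V → ℝ≥0∞
  | _, [] => 0
  | s, x :: l => wD s x + dWalkLen wD x l

/-- Shortest directed path distance in the directed graph `D` under arc weights `wD`. -/
noncomputable def ddist (D : V → V → Prop) (wD : V → V → ℝ≥0∞) (s t : V) : ℝ≥0∞ :=
  ⨅ (l : List V) (_ : List.Chain D s l ∧ l.getLastD s = t), dWalkLen wD s l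

/-!
Let `p` be an up-down `x`-`y` path of `m_P`-length `m_P x y` with at least two edges and let `v`
be its second vertex. Since `rk x < rk y`, the path starts upward, so `rk x < rk v`. Because `m_P`
is itself a shortest-path distance, the rest of `p` has length at least `m_P v y`, which forces
`m_P x y = m_P x v + m_P v y`; as `m_P` is positive on distinct vertices, this also rules out
`v = y`. Finally, when `x` is contracted its neighbors `v` and `y`, both of higher rank, are still
present, so `{v, y}` is an edge of `G*π` and `{x, y, v}` is an intermediate or upper triangle.
-/

theorem chList_not_adj_of_isolated (l : List V) (H : SimpleGraph V) (x : V)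
    (hx : ∀ b, ¬ H.Adj x b) : ∀ b, ¬ (chList H l).Adj x b := by
  induction l generalizing H with
  | nil => exact hx
  | cons v l ih =>
    rintro b (hb | hb)
    · exact hx b hb
    · refine ih (chStep H v) (fun c hc => ?_) b hb
      rcases hc.2.2.2 with h | ⟨hvx, -⟩
      · exact hx c h
      · exact hx v hvx.symm

theorem le_chList (H : SimpleGraph V) (l : List V) : H ≤ chList H l := by
  cases l with
  | nil => exact le_rfl
  | cons v l => exact le_sup_left

theorem chList_append_cons_adj (l₁ : List V) (H : SimpleGraph V) (l₂ : List V) {x z y : V}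
    (hzy : z ≠ y) (hx : x ∉ l₁) (hz : z ∉ l₁) (hy : y ∉ l₁)
    (hxz : (chList H (l₁ ++ x :: l₂)).Adj x z) (hxy : (chList H (l₁ ++ x :: l₂)).Adj x y) :
    (chList H (l₁ ++ x :: l₂)).Adj z y := by
  induction l₁ generalizing H with
  | nil =>
    have hiso := chList_not_adj_of_isolated l₂ (chStep H x) x fun b hb => hb.2.1 rfl
    have hxz' : H.Adj x z := hxz.resolve_right (hiso z)
    have hxy' : H.Adj x y := hxy.resolve_right (hiso y)
    exact Or.inr (le_chList _ l₂ ⟨hzy, hxz'.ne', hxy'.ne', Or.inr ⟨hxz', hxy'⟩⟩)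
  | cons v l₁ ih =>
    rw [List.mem_cons, not_or] at hx hz hy
    have lift : ∀ {a}, a ≠ v → (chList H (v :: (l₁ ++ x :: l₂))).Adj x a →
        (chList (chStep H v) (l₁ ++ x :: l₂)).Adj x a := by
      rintro a ha (h | h)
      · exact le_chList _ _ ⟨h.ne, hx.1, ha, Or.inl h⟩
      · exact h
    exact Or.inr (ih (chStep H v) hx.2 hz.2 hy.2 (lift hz.1 hxz) (lift hy.1 hxy))

theorem exists_map_finRange_eq_append {n : ℕ} (π : Fin n ≃ V) (x : V) :
    ∃ l₁ l₂, (List.finRange n).map π = l₁ ++ x :: l₂ ∧ ∀ v ∈ l₁, rk π v < rk π x := by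
  obtain ⟨l₁, l₂, hl⟩ := List.append_of_mem
    (List.mem_map.2 ⟨π.symm x, List.mem_finRange _, π.apply_symm_apply x⟩)
  have hpw : ((List.finRange n).map π).Pairwise (fun a b => rk π a < rk π b) := by
    rw [List.pairwise_map]
    simpa [rk] using List.pairwise_lt_finRange n
  rw [hl, List.pairwise_append] at hpw
  exact ⟨l₁, l₂, hl, fun v hv => hpw.2.2 v hv x List.mem_cons_self⟩

theorem chGraph_adj_of_adj_of_rk_lt {n : ℕ} (G : SimpleGraph V) (π : Fin n ≃ V) {x z y : V}
    (hxz : (chGraph G π).Adj x z) (hxy : (chGraph G π).Adj x y)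
    (hrz : rk π x < rk π z) (hry : rk π x < rk π y) (hzy : z ≠ y) :
    (chGraph G π).Adj z y := by
  obtain ⟨l₁, l₂, hl, hlt⟩ := exists_map_finRange_eq_append π x
  rw [chGraph, hl] at hxz hxy ⊢
  exact chList_append_cons_adj l₁ G l₂ hzy (fun h => (hlt x h).false)
    (fun h => (hlt z h).not_gt hrz) (fun h => (hlt y h).not_gt hry) hxz hxy

theorem IsUpDown.lt_second_of_lt {r : V → ℕ} {a b c : V} {l : List V}
    (h : IsUpDown r (a :: b :: l)) (hc : c ∈ b :: l) (hac : r a < r c) : r a < r b := by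
  obtain ⟨l₁, pk, l₂, heq, hup, hdn⟩ := h
  rcases l₁ with _ | ⟨a', l₁⟩
  · obtain ⟨rfl, rfl⟩ := List.cons.inj heq
    have : IsTrans V (fun u v => r v < r u) := ⟨fun _ _ _ h₁ h₂ => h₂.trans h₁⟩
    exact absurd hac (List.rel_of_pairwise_cons (List.isChain_iff_pairwise.mp hdn) hc).not_gt
  · simp only [List.cons_append, List.cons.injEq] at heq
    obtain ⟨rfl, heq⟩ := heq
    rcases l₁ with _ | ⟨b', l₁⟩ <;> obtain ⟨rfl, -⟩ := List.cons.inj heq <;>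
      exact (List.isChain_cons_cons.mp hup).1

section Distance

variable {H G : SimpleGraph V} {w : V → V → ℝ≥0∞}

@[simp]
theorem wlen_cons (m : V → V → ℝ≥0∞) {s u t : V} (h : H.Adj s u) (p : H.Walk u t) :
    wlen m (Walk.cons h p) = m s u + wlen m p := by
  simp [wlen]

theorem wlen_append (m : V → V → ℝ≥0∞) {s u t : V} (p : H.Walk s u) (q : H.Walk u t) :
    wlen m (p.append q) = wlen m p + wlen m q := by
  simp [wlen, Walk.darts_append]

theorem gdist_le_wlen {s t : V} (p : G.Walk s t) : gdist G w s t ≤ wlen w p :=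
  iInf_le _ p

theorem gdist_self (s : V) : gdist G w s s = 0 :=
  nonpos_iff_eq_zero.mp (gdist_le_wlen Walk.nil)

theorem gdist_triangle (s u t : V) : gdist G w s t ≤ gdist G w s u + gdist G w u t := by
  change _ ≤ (⨅ p : G.Walk s u, wlen w p) + ⨅ q : G.Walk u t, wlen w q
  rw [ENNReal.iInf_add]
  refine le_iInf fun p => ?_
  rw [ENNReal.add_iInf]
  exact le_iInf fun q => (gdist_le_wlen (p.append q)).trans_eq (wlen_append w p q)

theorem gdist_le_wlen_gdist {s t : V} (p : H.Walk s t) : gdist G w s t ≤ wlen (gdist G w) p := by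
  induction p with
  | nil => exact (gdist_self _).le
  | @cons s u t h q ih =>
    rw [wlen_cons]
    exact (gdist_triangle s u t).trans (add_le_add le_rfl ih)

theorem gdist_ne_top (hG : G.Connected) (hw : ∀ a b, G.Adj a b → w a b ≠ ⊤) (s t : V) :
    gdist G w s t ≠ ⊤ := by
  obtain ⟨p⟩ := hG.preconnected s t
  refine ne_top_of_le_ne_top ?_ (gdist_le_wlen p)
  induction p with
  | nil => exact ENNReal.zero_ne_top
  | cons h q ih => simpa using ⟨hw _ _ h, ih⟩

theorem gdist_pos [Finite V] (hw : ∀ a b, G.Adj a b → 0 < w a b) {s t : V} (hst : s ≠ t) :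
    0 < gdist G w s t := by
  classical
  let f : V × V → ℝ≥0∞ := fun q => if G.Adj q.1 q.2 then w q.1 q.2 else ⊤
  have : Nonempty (V × V) := ⟨(s, t)⟩
  obtain ⟨q₀, hq₀⟩ := Finite.exists_min f
  have hf₀ : 0 < f q₀ := by
    by_cases h : G.Adj q₀.1 q₀.2 <;> simp [f, h, hw]
  refine hf₀.trans_le (le_iInf fun p => ?_)
  cases p with
  | nil => exact absurd rfl hst
  | @cons _ u _ h q =>
    calc f q₀ ≤ f (s, u) := hq₀ _
      _ = w s u := if_pos h
      _ ≤ wlen w (Walk.cons h q) := by rw [wlen_cons]; exact le_self_add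

theorem gdist_eq_add_of_wlen_cons_eq {s u t : V} (h : H.Adj s u) (q : H.Walk u t)
    (hsu : gdist G w s u ≠ ⊤) (hlen : wlen (gdist G w) (Walk.cons h q) = gdist G w s t) :
    gdist G w s t = gdist G w s u + gdist G w u t ∧ wlen (gdist G w) q = gdist G w u t := by
  rw [wlen_cons] at hlen
  have hle : gdist G w s u + wlen (gdist G w) q ≤ gdist G w s u + gdist G w u t :=
    hlen.le.trans (gdist_triangle s u t)
  have hq : wlen (gdist G w) q = gdist G w u t :=
    le_antisymm ((ENNReal.add_le_add_iff_left hsu).mp hle) (gdist_le_wlen_gdist q)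
  exact ⟨by rw [← hlen, hq], hq⟩

end Distance

theorem stmt12_general {V : Type*} {n : ℕ} (G : SimpleGraph V) (hG : G.Connected)
    (π : Fin n ≃ V) (w : V → V → ℝ≥0∞)
    (hw_pos : ∀ a b, G.Adj a b → 0 < w a b ∧ w a b < ⊤)
    (x y : V) (hxy : (chGraph G π).Adj x y) (hr : rk π x < rk π y)
    (hno : ¬ ∃ z : V, (chGraph G π).Adj x z ∧ (chGraph G π).Adj z y ∧ rk π x < rk π z ∧
      gdist G w x y = gdist G w x z + gdist G w z y) :
    ∀ p : (chGraph G π).Walk x y, IsUpDown (rk π) p.support →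
      wlen (fun a b => gdist G w a b) p = gdist G w x y → p.support = [x, y] := by
  have : Finite V := .of_equiv _ π
  rintro (_ | @⟨_, v, _, hxv, _ | ⟨hvu, q⟩⟩) hud hlen
  · exact absurd hr (lt_irrefl _)
  · rfl
  have hfin := gdist_ne_top hG (fun a b h => (hw_pos a b h).2.ne) x v
  obtain ⟨hsplit, hrest⟩ := gdist_eq_add_of_wlen_cons_eq hxv _ hfin hlen
  have hvy : v ≠ y := by
    rintro rfl
    have hpos : 0 < wlen (gdist G w) (Walk.cons hvu q) :=
      (gdist_pos (fun a b h => (hw_pos a b h).1) hvu.ne).trans_le (by simp)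
    exact hpos.ne' (hrest.trans (gdist_self v))
  have hrv : rk π x < rk π v := by
    simp only [Walk.support_cons] at hud
    exact hud.lt_second_of_lt (List.mem_cons_of_mem v q.end_mem_support) hr
  exact (hno ⟨v, hxv, chGraph_adj_of_adj_of_rk_lt G π hxv hxy hrv hr hvy, hrv, hsplit⟩).elim

/-- If no intermediate or upper triangle `{x, y, z}` satisfies
`m_P x y = m_P x z + m_P z y`, then the single-arc path consisting of the arc
`(x, y)` is the only up-down `x`-`y` path whose length under the perfect metric
`m_P` equals `m_P x y`. -/
theorem stmt12 {V : Type*} {n : ℕ} (G : SimpleGraph V) (hG : G.Connected)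
    (π : Fin n ≃ V) (w : V → V → ℝ≥0∞)
    (hw_symm : ∀ a b, w a b = w b a)
    (hw_pos : ∀ a b, G.Adj a b → 0 < w a b ∧ w a b < ⊤)
    (x y : V) (hxy : (chGraph G π).Adj x y) (hr : rk π x < rk π y)
    (hno : ¬ ∃ z : V, (chGraph G π).Adj x z ∧ (chGraph G π).Adj z y ∧ rk π x < rk π z ∧
      gdist G w x y = gdist G w x z + gdist G w z y) :
    ∀ p : (chGraph G π).Walk x y, IsUpDown (rk π) p.support →
      wlen (fun a b => gdist G w a b) p = gdist G w x y → p.support = [x, y] :=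
  stmt12_general G hG π w hw_pos x y hxy hr hno
end

section
/- Let D be a finite strongly connected directed graph on vertex set V with strictly positive arc weights w, let G be the underlying simple undirected graph of D, and let π be a contraction order of G with contraction hierarchy G*π. Suppose the pair (m_u, m_d) of directed metrics respects w and fulfills the directed lower triangle inequalities: for every edge {x,y} of G*π with π⁻¹(x) < π⁻¹(y) and every lower triangle {x,y,z}, both m_u(x,y) ≤ m_d(z,x) + m_u(z,y) and m_d(x,y) ≤ m_u(z,x) + m_d(z,y) hold. Then for all vertices s and t there exists an up-down st-path in G*π whose directed length equals the shortest st-path distance in D under w. -/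
open SimpleGraph
open scoped ENNReal

variable {V : Type*}

/-!
When a vertex `z` is contracted, its neighbours of higher rank become pairwise adjacent, so two
higher neighbours of a vertex are adjacent in `G*π`. Consequently a valley `a z b` of a walk in
`G*π` (`z` of lower rank than `a` and `b`) can be replaced by the edge `a b`, or dropped when
`a = b`, and by the directed lower triangle inequalities this does not increase the directed
length. Removing valleys turns every walk into an up-down walk that is no longer. Up-down walks
have at most `2|V|` vertices, so there are finitely many and one of them has minimal directed
length; it realises the infimum over all walks, which is the distance in `D` because
`(m_u, m_d)` respects `w`.
-/

lemma chList_le (H : SimpleGraph V) : ∀ l : List V, H ≤ chList H l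
  | [] => le_rfl
  | _ :: _ => le_sup_left

lemma not_chList_adj_of_isolated {z : V} : ∀ {H : SimpleGraph V} (l : List V),
    (∀ x, ¬ H.Adj z x) → ∀ x, ¬ (chList H l).Adj z x
  | _, [], hz => hz
  | H, v :: l, hz => by
    rintro x (hx | hx)
    · exact hz x hx
    · refine not_chList_adj_of_isolated l (fun y hy => ?_) x hx
      obtain ⟨-, -, -, h | ⟨h, -⟩⟩ := hy
      exacts [hz y h, hz v h.symm]

lemma chList_adj_of_lower_common_neighbor (r : V → ℕ) {z a b : V} (hza : r z < r a)
    (hzb : r z < r b) (hab : a ≠ b) : ∀ {H : SimpleGraph V} {l : List V},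
    l.Pairwise (fun x y => r x < r y) → z ∈ l →
    (chList H l).Adj z a → (chList H l).Adj z b → (chList H l).Adj a b
  | H, v :: l, hl, hz, ha, hb => by
    rcases eq_or_ne v z with rfl | hvz
    · have hiso : ∀ x, ¬ (chList (chStep H v) l).Adj v x :=
        not_chList_adj_of_isolated l fun x hx => hx.2.1 rfl
      exact Or.inr <| chList_le _ l ⟨hab, ne_of_apply_ne r hza.ne', ne_of_apply_ne r hzb.ne',
        Or.inr ⟨ha.resolve_right (hiso a), hb.resolve_right (hiso b)⟩⟩
    · have hz' : z ∈ l := (List.mem_cons.mp hz).resolve_left hvz.symm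
      have hv : r v < r z := List.rel_of_pairwise_cons hl hz'
      have lift : ∀ x, r z < r x → (chList H (v :: l)).Adj z x →
          (chList (chStep H v) l).Adj z x := by
        rintro x hx (h | h)
        · exact chList_le _ l
            ⟨h.ne, hvz.symm, ne_of_apply_ne r (hv.trans hx).ne', Or.inl h⟩
        · exact h
      exact Or.inr <| chList_adj_of_lower_common_neighbor r hza hzb hab hl.of_cons hz'
        (lift a hza ha) (lift b hzb hb)

lemma rk_injective {n : ℕ} (π : Fin n ≃ V) : Function.Injective (rk π) :=
  fun _ _ h => π.symm.injective (Fin.ext h)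

def LowerTriangleClosed (H : SimpleGraph V) (r : V → ℕ) : Prop :=
  ∀ ⦃z a b⦄, H.Adj z a → H.Adj z b → r z < r a → r z < r b → a ≠ b → H.Adj a b

lemma chGraph_lowerTriangleClosed {n : ℕ} (G : SimpleGraph V) (π : Fin n ≃ V) :
    LowerTriangleClosed (chGraph G π) (rk π) := by
  intro z a b ha hb hza hzb hab
  have hsorted : ((List.finRange n).map π).Pairwise (fun x y => rk π x < rk π y) := by
    simpa [List.pairwise_map, rk] using List.pairwise_lt_finRange n
  exact chList_adj_of_lower_common_neighbor (rk π) hza hzb hab hsorted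
    (List.mem_map.mpr ⟨π.symm z, List.mem_finRange _, π.apply_symm_apply z⟩) ha hb

namespace IsUpDown

variable {r : V → ℕ} {a b : V} {l : List V}

lemma singleton (a : V) : IsUpDown r [a] :=
  ⟨[], a, [], rfl, List.isChain_singleton _, List.isChain_singleton _⟩

lemma of_isChain_gt (h : List.IsChain (fun x y => r y < r x) (a :: l)) : IsUpDown r (a :: l) :=
  ⟨[], a, l, rfl, List.isChain_singleton _, h⟩

lemma cons_of_lt (hab : r a < r b) (h : IsUpDown r (b :: l)) : IsUpDown r (a :: b :: l) := by
  obtain ⟨l₁, x, l₂, hl, hup, hdn⟩ := h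
  refine ⟨a :: l₁, x, l₂, by rw [hl, List.cons_append], hup.cons fun y hy => ?_, hdn⟩
  cases l₁ <;> simp_all

lemma tail_of_lt (h : IsUpDown r (a :: b :: l)) (hab : r a < r b) : IsUpDown r (b :: l) := by
  obtain ⟨l₁, x, l₂, hl, hup, hdn⟩ := h
  cases l₁ with
  | nil =>
    obtain ⟨rfl, rfl⟩ := List.cons_eq_cons.mp hl
    exact absurd (List.isChain_cons_cons.mp hdn).1 hab.not_gt
  | cons c l₁ =>
    rw [List.cons_append, List.cons_eq_cons] at hl
    obtain ⟨rfl, hl⟩ := hl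
    exact ⟨l₁, x, l₂, hl, hup.tail, hdn⟩

lemma isChain_gt (h : IsUpDown r (a :: b :: l)) (hba : r b < r a) :
    List.IsChain (fun x y => r y < r x) (a :: b :: l) := by
  obtain ⟨l₁, x, l₂, hl, hup, hdn⟩ := h
  cases l₁ with
  | nil =>
    obtain ⟨rfl, rfl⟩ := List.cons_eq_cons.mp hl
    exact hdn
  | cons c l₁ =>
    rw [List.cons_append, List.cons_eq_cons] at hl
    obtain ⟨rfl, hl⟩ := hl
    have hab : r a < r b := by
      cases l₁ with
      | nil =>
        obtain ⟨rfl, -⟩ := List.cons_eq_cons.mp hl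
        exact (List.isChain_cons_cons.mp hup).1
      | cons d l₁ =>
        rw [List.cons_append, List.cons_eq_cons] at hl
        obtain ⟨rfl, -⟩ := hl
        exact (List.isChain_cons_cons.mp hup).1
    exact absurd hab hba.not_gt

lemma length_le [Fintype V] (h : IsUpDown r l) : l.length ≤ 2 * Fintype.card V := by
  obtain ⟨l₁, x, l₂, rfl, hup, hdn⟩ := h
  have h₁ : (l₁ ++ [x]).Nodup := List.Nodup.of_map r <|
    (List.isChain_iff_pairwise.mp ((List.isChain_map r).mpr hup)).imp ne_of_lt
  have h₂ : (x :: l₂).Nodup := List.Nodup.of_map r <|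
    (List.isChain_iff_pairwise.mp ((List.isChain_map (R := (· > ·)) r).mpr hdn)).imp ne_of_gt
  have := h₁.length_le_card
  have := h₂.length_le_card
  simp only [List.length_append, List.length_cons, List.length_nil] at *
  omega

end IsUpDown

noncomputable def dcost (r : V → ℕ) (mu md : V → V → ℝ≥0∞) (x y : V) : ℝ≥0∞ :=
  if r x < r y then mu x y else md y x

def LowerTriangleIneq (H : SimpleGraph V) (r : V → ℕ) (c : V → V → ℝ≥0∞) : Prop :=
  ∀ ⦃z a b⦄, H.Adj a b → H.Adj z a → H.Adj z b → r z < r a → r z < r b →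
    c a b ≤ c a z + c z b

section DirectedLength

variable {H : SimpleGraph V} {r : V → ℕ} {mu md : V → V → ℝ≥0∞}

lemma dlen_cons {s u t : V} (h : H.Adj s u) (p : H.Walk u t) :
    dlen r mu md (Walk.cons h p) = dcost r mu md s u + dlen r mu md p := by
  simp [dlen, dcost]

lemma lowerTriangleIneq_dcost (hr : Function.Injective r)
    (hlt : ∀ x y z, H.Adj x y → H.Adj z x → H.Adj z y → r x < r y → r z < r x →
      mu x y ≤ md z x + mu z y ∧ md x y ≤ mu z x + md z y) :
    LowerTriangleIneq H r (dcost r mu md) := by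
  intro z a b hab hza hzb ha hb
  rw [dcost, dcost, dcost, if_neg ha.not_gt, if_pos hb]
  rcases (hr.ne hab.ne).lt_or_gt with h | h
  · rw [if_pos h]
    exact (hlt a b z hab hza hzb h ha).1
  · rw [if_neg h.not_gt, add_comm]
    exact (hlt b a z hab.symm hzb hza h hb).2

lemma exists_isUpDown_cons_le (hr : Function.Injective r) (htri : LowerTriangleClosed H r)
    (hcost : LowerTriangleIneq H r (dcost r mu md))
    {s u t : V} (h : H.Adj s u) (q : H.Walk u t)
    (hq : IsUpDown r q.support) : ∃ q' : H.Walk s t,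
      IsUpDown r q'.support ∧ dlen r mu md q' ≤ dcost r mu md s u + dlen r mu md q := by
  induction q generalizing s with
  | nil =>
    refine ⟨.cons h .nil, ?_, by rw [dlen_cons]⟩
    rcases (hr.ne h.ne).lt_or_gt with hsu | hus
    · exact .cons_of_lt hsu (.singleton _)
    · exact .of_isChain_gt (List.isChain_pair.mpr hus)
  | @cons u u' t h' q ih =>
    rw [Walk.support_cons, ← q.cons_tail_support] at hq
    rcases (hr.ne h.ne).lt_or_gt with hsu | hus
    · refine ⟨.cons h (.cons h' q), ?_, (dlen_cons h _).le⟩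
      rw [Walk.support_cons, Walk.support_cons, ← q.cons_tail_support]
      exact .cons_of_lt hsu hq
    rcases (hr.ne h'.ne).lt_or_gt with huu' | hu'u
    · have hq' : IsUpDown r q.support := q.cons_tail_support ▸ hq.tail_of_lt huu'
      rw [dlen_cons, ← add_assoc]
      rcases eq_or_ne s u' with rfl | hsu'
      · exact ⟨q, hq', le_add_self⟩
      have hsu'_adj : H.Adj s u' := htri h.symm h' hus huu' hsu'
      obtain ⟨q', hq'ud, hle⟩ := ih hsu'_adj hq'
      exact ⟨q', hq'ud, hle.trans (by gcongr; exact hcost hsu'_adj h.symm h' hus huu')⟩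
    · refine ⟨.cons h (.cons h' q), ?_, (dlen_cons h _).le⟩
      rw [Walk.support_cons, Walk.support_cons, ← q.cons_tail_support]
      exact .of_isChain_gt (List.isChain_cons_cons.mpr ⟨hus, hq.isChain_gt hu'u⟩)

lemma exists_isUpDown_le (hr : Function.Injective r) (htri : LowerTriangleClosed H r)
    (hcost : LowerTriangleIneq H r (dcost r mu md))
    {s t : V} (p : H.Walk s t) :
    ∃ q : H.Walk s t, IsUpDown r q.support ∧ dlen r mu md q ≤ dlen r mu md p := by
  induction p with
  | nil => exact ⟨.nil, .singleton _, le_rfl⟩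
  | cons h p ih =>
    obtain ⟨q, hq, hle⟩ := ih
    obtain ⟨q', hq', hle'⟩ := exists_isUpDown_cons_le hr htri hcost h q hq
    exact ⟨q', hq', hle'.trans (by rw [dlen_cons]; gcongr)⟩

lemma finite_setOf_isUpDown [Fintype V] (s t : V) :
    {q : H.Walk s t | IsUpDown r q.support}.Finite :=
  ((List.finite_length_le V (2 * Fintype.card V)).preimage Walk.support_injective.injOn).subset
    fun _ hq => IsUpDown.length_le hq

lemma exists_isUpDown_dlen_eq_iInf [Fintype V] (hr : Function.Injective r)
    (htri : LowerTriangleClosed H r)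
    (hcost : LowerTriangleIneq H r (dcost r mu md))
    {s t : V} (hst : H.Reachable s t) : ∃ q : H.Walk s t,
      IsUpDown r q.support ∧ dlen r mu md q = ⨅ p : H.Walk s t, dlen r mu md p := by
  obtain ⟨p⟩ := hst
  obtain ⟨q₀, hq₀, -⟩ := exists_isUpDown_le hr htri hcost p
  obtain ⟨q, hq, hmin⟩ :=
    Set.exists_min_image _ (dlen r mu md) (finite_setOf_isUpDown s t) ⟨q₀, hq₀⟩
  refine ⟨q, hq, le_antisymm (le_iInf fun p => ?_) (iInf_le _ q)⟩
  obtain ⟨q', hq', hle⟩ := exists_isUpDown_le hr htri hcost p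
  exact (hmin q' hq').trans hle

end DirectedLength

lemma reachable_of_chain {D : V → V → Prop} {G : SimpleGraph V}
    (hDG : ∀ a b, D a b → a ≠ b → G.Adj a b) :
    ∀ {s : V} {l : List V}, List.IsChain D (s :: l) → G.Reachable s (l.getLastD s)
  | _, [], _ => Reachable.refl _
  | s, x :: l, h => by
    rw [List.isChain_cons_cons] at h
    rw [List.getLastD_cons]
    refine Reachable.trans ?_ (reachable_of_chain hDG h.2)
    rcases eq_or_ne s x with rfl | hsx
    exacts [Reachable.refl _, (hDG s x h.1 hsx).reachable]

theorem stmt15_general {V : Type*} [Fintype V] {n : ℕ}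
    (D : V → V → Prop) (wD : V → V → ℝ≥0∞)
    (hsc : ∀ s t : V, ∃ l : List V, List.Chain D s l ∧ l.getLastD s = t)
    (G : SimpleGraph V) (hGD : ∀ a b, G.Adj a b ↔ a ≠ b ∧ (D a b ∨ D b a))
    (π : Fin n ≃ V) (mu md : V → V → ℝ≥0∞)
    (hresp : ∀ s t, (⨅ p : (chGraph G π).Walk s t, dlen (rk π) mu md p) = ddist D wD s t)
    (hlt : ∀ x y z, (chGraph G π).Adj x y → (chGraph G π).Adj z x →
      (chGraph G π).Adj z y → rk π x < rk π y → rk π z < rk π x →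
      mu x y ≤ md z x + mu z y ∧ md x y ≤ mu z x + md z y) :
    ∀ s t : V, ∃ p : (chGraph G π).Walk s t,
      IsUpDown (rk π) p.support ∧ dlen (rk π) mu md p = ddist D wD s t := by
  intro s t
  obtain ⟨l, hl, rfl⟩ := hsc s t
  have hst : (chGraph G π).Reachable s (l.getLastD s) :=
    (reachable_of_chain (fun a b hab hne => (hGD a b).mpr ⟨hne, Or.inl hab⟩) hl).mono
      (chList_le G _)
  obtain ⟨q, hq, hlen⟩ := exists_isUpDown_dlen_eq_iInf (rk_injective π)
    (chGraph_lowerTriangleClosed G π) (lowerTriangleIneq_dcost (rk_injective π) hlt) hst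
  exact ⟨q, hq, hlen.trans (hresp _ _)⟩

/-- Directed version. If the pair `(m_u, m_d)` of directed metrics
respects the arc weights `w` of the strongly connected directed graph `D` and
fulfills the directed lower triangle inequalities, then for all `s`, `t` there is an
up-down `s`-`t` path in `G*π` whose directed length equals the shortest `s`-`t`
distance in `D`. -/
theorem stmt15 {V : Type*} [Fintype V] {n : ℕ}
    (D : V → V → Prop) (wD : V → V → ℝ≥0∞)
    (hwD_pos : ∀ a b, D a b → 0 < wD a b ∧ wD a b < ⊤)
    (hsc : ∀ s t : V, ∃ l : List V, List.Chain D s l ∧ l.getLastD s = t)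
    (G : SimpleGraph V) (hGD : ∀ a b, G.Adj a b ↔ a ≠ b ∧ (D a b ∨ D b a))
    (π : Fin n ≃ V) (mu md : V → V → ℝ≥0∞)
    (hm_pos : ∀ x y, (chGraph G π).Adj x y → rk π x < rk π y →
      0 < mu x y ∧ 0 < md x y)
    (hresp : ∀ s t, (⨅ p : (chGraph G π).Walk s t, dlen (rk π) mu md p) = ddist D wD s t)
    (hlt : ∀ x y z, (chGraph G π).Adj x y → (chGraph G π).Adj z x →
      (chGraph G π).Adj z y → rk π x < rk π y → rk π z < rk π x →
      mu x y ≤ md z x + mu z y ∧ md x y ≤ mu z x + md z y) :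
    ∀ s t : V, ∃ p : (chGraph G π).Walk s t,
      IsUpDown (rk π) p.support ∧ dlen (rk π) mu md p = ddist D wD s t :=
  stmt15_general D wD hsc G hGD π mu md hresp hlt
end
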